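/- arXiv:2502.04382 — 7 statements merged into one kernel-verified Lean document; each statement's English description precedes it below -/
import Mathlib

section
/- Let (Ω, 𝒜, μ) be a probability space, Y : Ω → ℝ a measurable function with 0 ≤ Y ≤ 1 pointwise, and A, B measurable sets with 0 < μ(A) < 1 and 0 < μ(B) < 1. For a measurable set E with μ(E) > 0 write E[Y|E] := (∫_E Y dμ)/μ(E), and define the separation scores S(A) := |E[Y|A] − E[Y|Aᶜ]| and S(B) := |E[Y|B] − E[Y|Bᶜ]|, and the fidelity δ(A,B) := max{μ(A\B)/μ(A), μ(B\A)/μ(B)} / min{μ(Aᶜ), μ(Bᶜ)}. Then |S(A) − S(B)| ≤ δ(A,B). -/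
open MeasureTheory

lemma key1 (p q r s Ip Iq Ir Is : ℝ)
    (hp : 0 ≤ p) (hq : 0 ≤ q) (hr : 0 ≤ r) (hs : 0 ≤ s)
    (hqr : q ≤ r) (hsum : p + q + r + s = 1)
    (ha : 0 < p + q) (hb : 0 < p + r) (hac : 0 < r + s) (hbc : 0 < q + s)
    (hIp0 : 0 ≤ Ip) (hIp1 : Ip ≤ p)
    (hIq0 : 0 ≤ Iq) (hIq1 : Iq ≤ q)
    (hIr0 : 0 ≤ Ir) (hIr1 : Ir ≤ r)
    (hIs0 : 0 ≤ Is) (hIs1 : Is ≤ s) :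
    |(|(Ip + Iq) / (p + q) - (Ir + Is) / (r + s)|
      - |(Ip + Ir) / (p + r) - (Iq + Is) / (q + s)|)|
    ≤ max (q / (p + q)) (r / (p + r)) / min (r + s) (q + s) := by
  have hcp : 0 ≤ 1 / (p + q) - 1 / (p + r) := by
    have := one_div_le_one_div_of_le ha (by linarith : p + q ≤ p + r)
    linarith
  have hcs : 0 ≤ 1 / (q + s) - 1 / (r + s) := by
    have := one_div_le_one_div_of_le hbc (by linarith : q + s ≤ r + s)
    linarith
  have hcq : 0 ≤ 1 / (p + q) + 1 / (q + s) := by positivity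
  have hcr : 0 ≤ 1 / (p + r) + 1 / (r + s) := by positivity
  set SA := (Ip + Iq) / (p + q) - (Ir + Is) / (r + s) with hSA
  set SB := (Ip + Ir) / (p + r) - (Iq + Is) / (q + s) with hSB
  have step1 : |(|SA| - |SB|)| ≤ |SA - SB| := abs_abs_sub_abs_le_abs_sub _ _
  have hdiff : SA - SB
      = Ip * (1 / (p + q) - 1 / (p + r)) + Iq * (1 / (p + q) + 1 / (q + s))
        - Ir * (1 / (p + r) + 1 / (r + s)) + Is * (1 / (q + s) - 1 / (r + s)) := by
    rw [hSA, hSB]; field_simp; ring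
  have hU : p * (1 / (p + q) - 1 / (p + r)) + q * (1 / (p + q) + 1 / (q + s))
        + s * (1 / (q + s) - 1 / (r + s)) = r * (1 / (p + r) + 1 / (r + s)) := by
    field_simp; ring
  have hupper : SA - SB ≤ r * (1 / (p + r) + 1 / (r + s)) := by
    rw [hdiff, ← hU]
    have h1 := mul_le_mul_of_nonneg_right hIp1 hcp
    have h2 := mul_le_mul_of_nonneg_right hIq1 hcq
    have h3 := mul_nonneg hIr0 hcr
    have h4 := mul_le_mul_of_nonneg_right hIs1 hcs
    linarith
  have hlower : -(r * (1 / (p + r) + 1 / (r + s))) ≤ SA - SB := by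
    rw [hdiff]
    have h1 := mul_nonneg hIp0 hcp
    have h2 := mul_nonneg hIq0 hcq
    have h3 := mul_le_mul_of_nonneg_right hIr1 hcr
    have h4 := mul_nonneg hIs0 hcs
    linarith
  have step2 : |SA - SB| ≤ r * (1 / (p + r) + 1 / (r + s)) :=
    abs_le.mpr ⟨hlower, hupper⟩
  have step3 : r * (1 / (p + r) + 1 / (r + s)) ≤ (r / (p + r)) / (q + s) := by
    have hb' : p + r = 1 - (q + s) := by linarith
    have haux : (r / (1 - (q+s))) / (q+s) - r * (1 / (1 - (q+s)) + 1 / (r+s))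
        = r / (q+s) - r / (r+s) := by
      have h1 : (1 : ℝ) - (q+s) ≠ 0 := by rw [← hb']; exact hb.ne'
      field_simp
      ring
    have hmono : r / (r+s) ≤ r / (q+s) := by gcongr
    rw [hb']
    linarith
  have step4 : (r / (p + r)) / (q + s)
      ≤ max (q / (p + q)) (r / (p + r)) / min (r + s) (q + s) := by
    rw [min_eq_right (by linarith : q + s ≤ r + s)]
    gcongr
    exact le_max_right _ _
  linarith

/-- Proposition 1 ("A Triangle Inequality for Hypothesis Generation").
`A` plays the role of the event `{Ẑ = 1}` and `B` the event `{Z = 1}`.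
For a set `E` of positive measure, `E[Y|E] = (∫_E Y dμ) / μ(E)`. -/
theorem triangle_inequality_for_hypothesis_generation
    {Ω : Type*} [MeasurableSpace Ω] (μ : Measure Ω) [IsProbabilityMeasure μ]
    (Y : Ω → ℝ) (hYmeas : Measurable Y)
    (hY0 : ∀ ω, 0 ≤ Y ω) (hY1 : ∀ ω, Y ω ≤ 1)
    (A B : Set Ω) (hA : MeasurableSet A) (hB : MeasurableSet B)
    (hA0 : 0 < μ A) (hA1 : μ A < 1) (hB0 : 0 < μ B) (hB1 : μ B < 1) :
    |(|(∫ ω in A, Y ω ∂μ) / (μ A).toReal - (∫ ω in Aᶜ, Y ω ∂μ) / (μ Aᶜ).toReal|)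
      - (|(∫ ω in B, Y ω ∂μ) / (μ B).toReal - (∫ ω in Bᶜ, Y ω ∂μ) / (μ Bᶜ).toReal|)|
    ≤ max ((μ (A \ B)).toReal / (μ A).toReal) ((μ (B \ A)).toReal / (μ B).toReal) /
        min (μ Aᶜ).toReal (μ Bᶜ).toReal := by
  have hYint : Integrable Y μ :=
    (integrable_const (1 : ℝ)).mono' hYmeas.aestronglyMeasurable
      (Filter.Eventually.of_forall fun ω => by
        rw [Real.norm_eq_abs, abs_of_nonneg (hY0 ω)]; exact hY1 ω)
  -- the four pieces
  have hP : MeasurableSet (A ∩ B) := hA.inter hB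
  have hQ : MeasurableSet (A \ B) := hA.diff hB
  have hR : MeasurableSet (B \ A) := hB.diff hA
  have hS : MeasurableSet (Aᶜ ∩ Bᶜ) := hA.compl.inter hB.compl
  -- set identities
  have e1 : Aᶜ ∩ B = B \ A := by ext ω; simp [Set.mem_diff]; tauto
  have e2 : Aᶜ \ B = Aᶜ ∩ Bᶜ := by ext ω; simp [Set.mem_diff]
  have e3 : B ∩ A = A ∩ B := Set.inter_comm _ _
  have e4 : Bᶜ ∩ A = A \ B := by ext ω; simp [Set.mem_diff]; tauto
  have e5 : Bᶜ \ A = Aᶜ ∩ Bᶜ := by ext ω; simp [Set.mem_diff]; tauto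
  -- measure splits
  have mA : μ (A ∩ B) + μ (A \ B) = μ A := measure_inter_add_diff A hB
  have mAc : μ (B \ A) + μ (Aᶜ ∩ Bᶜ) = μ Aᶜ := by
    have := measure_inter_add_diff (μ := μ) Aᶜ hB
    rwa [e1, e2] at this
  have mB : μ (A ∩ B) + μ (B \ A) = μ B := by
    have := measure_inter_add_diff (μ := μ) B hA
    rwa [e3] at this
  have mBc : μ (A \ B) + μ (Aᶜ ∩ Bᶜ) = μ Bᶜ := by
    have := measure_inter_add_diff (μ := μ) Bᶜ hA
    rwa [e4, e5] at this
  -- real masses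
  set p := (μ (A ∩ B)).toReal with hpdef
  set q := (μ (A \ B)).toReal with hqdef
  set r := (μ (B \ A)).toReal with hrdef
  set s := (μ (Aᶜ ∩ Bᶜ)).toReal with hsdef
  have hp : 0 ≤ p := ENNReal.toReal_nonneg
  have hq : 0 ≤ q := ENNReal.toReal_nonneg
  have hr : 0 ≤ r := ENNReal.toReal_nonneg
  have hs : 0 ≤ s := ENNReal.toReal_nonneg
  have tA : (μ A).toReal = p + q := by
    rw [← mA, ENNReal.toReal_add (measure_ne_top μ _) (measure_ne_top μ _)]
  have tAc : (μ Aᶜ).toReal = r + s := by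
    rw [← mAc, ENNReal.toReal_add (measure_ne_top μ _) (measure_ne_top μ _)]
  have tB : (μ B).toReal = p + r := by
    rw [← mB, ENNReal.toReal_add (measure_ne_top μ _) (measure_ne_top μ _)]
  have tBc : (μ Bᶜ).toReal = q + s := by
    rw [← mBc, ENNReal.toReal_add (measure_ne_top μ _) (measure_ne_top μ _)]
  -- positivity
  have hApos : 0 < (μ A).toReal := ENNReal.toReal_pos hA0.ne' (measure_ne_top μ A)
  have hBpos : 0 < (μ B).toReal := ENNReal.toReal_pos hB0.ne' (measure_ne_top μ B)
  have hAcne : μ Aᶜ ≠ 0 := by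
    rw [measure_compl hA (measure_ne_top μ A), measure_univ]
    intro hcon
    have : (1 : ENNReal) ≤ μ A := tsub_eq_zero_iff_le.mp hcon
    exact absurd hA1 (not_lt.mpr this)
  have hBcne : μ Bᶜ ≠ 0 := by
    rw [measure_compl hB (measure_ne_top μ B), measure_univ]
    intro hcon
    have : (1 : ENNReal) ≤ μ B := tsub_eq_zero_iff_le.mp hcon
    exact absurd hB1 (not_lt.mpr this)
  have hAcpos : 0 < (μ Aᶜ).toReal := ENNReal.toReal_pos hAcne (measure_ne_top μ _)
  have hBcpos : 0 < (μ Bᶜ).toReal := ENNReal.toReal_pos hBcne (measure_ne_top μ _)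
  have ha : 0 < p + q := tA ▸ hApos
  have hb : 0 < p + r := tB ▸ hBpos
  have hac : 0 < r + s := tAc ▸ hAcpos
  have hbc : 0 < q + s := tBc ▸ hBcpos
  have hsum : p + q + r + s = 1 := by
    have h1 : μ A + μ Aᶜ = 1 := by
      rw [measure_add_measure_compl hA, measure_univ]
    have h2 : (μ A).toReal + (μ Aᶜ).toReal = 1 := by
      rw [← ENNReal.toReal_add (measure_ne_top μ _) (measure_ne_top μ _), h1,
        ENNReal.toReal_one]
    rw [tA, tAc] at h2
    linarith
  -- integral splits
  have iA : ∫ ω in A, Y ω ∂μ = (∫ ω in A ∩ B, Y ω ∂μ) + ∫ ω in A \ B, Y ω ∂μ :=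
    (integral_inter_add_diff hB hYint.integrableOn).symm
  have iAc : ∫ ω in Aᶜ, Y ω ∂μ = (∫ ω in B \ A, Y ω ∂μ) + ∫ ω in Aᶜ ∩ Bᶜ, Y ω ∂μ := by
    have := integral_inter_add_diff hB (hYint.integrableOn (s := Aᶜ))
    rw [e1, e2] at this
    exact this.symm
  have iB : ∫ ω in B, Y ω ∂μ = (∫ ω in A ∩ B, Y ω ∂μ) + ∫ ω in B \ A, Y ω ∂μ := by
    have := integral_inter_add_diff hA (hYint.integrableOn (s := B))
    rw [e3] at this
    exact this.symm
  have iBc : ∫ ω in Bᶜ, Y ω ∂μ = (∫ ω in A \ B, Y ω ∂μ) + ∫ ω in Aᶜ ∩ Bᶜ, Y ω ∂μ := by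
    have := integral_inter_add_diff hA (hYint.integrableOn (s := Bᶜ))
    rw [e4, e5] at this
    exact this.symm
  -- integral bounds
  have ilb : ∀ E : Set Ω, MeasurableSet E → 0 ≤ ∫ ω in E, Y ω ∂μ := fun E hE =>
    setIntegral_nonneg hE fun ω _ => hY0 ω
  have iub : ∀ E : Set Ω, MeasurableSet E → (∫ ω in E, Y ω ∂μ) ≤ (μ E).toReal := by
    intro E hE
    calc (∫ ω in E, Y ω ∂μ) ≤ ∫ _ω in E, (1 : ℝ) ∂μ :=
          setIntegral_mono_on hYint.integrableOn
            (integrableOn_const (measure_lt_top μ E).ne) hE fun ω _ => hY1 ω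
      _ = (μ E).toReal := by simp [measureReal_def]
  rw [iA, iAc, iB, iBc, tA, tAc, tB, tBc]
  rcases le_total q r with hle | hle
  · exact key1 p q r s _ _ _ _ hp hq hr hs hle hsum ha hb hac hbc
      (ilb _ hP) (iub _ hP) (ilb _ hQ) (iub _ hQ) (ilb _ hR) (iub _ hR)
      (ilb _ hS) (iub _ hS)
  · have h := key1 p r q s _ _ _ _ hp hr hq hs hle (by linarith) hb ha hbc hac
      (ilb _ hP) (iub _ hP) (ilb _ hR) (iub _ hR) (ilb _ hQ) (iub _ hQ)
      (ilb _ hS) (iub _ hS)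
    rw [abs_sub_comm, max_comm, min_comm] at h
    exact h
end

section
/- Let p11, p10, p01, p00 be nonnegative real numbers with p11 + p10 + p01 + p00 = 1 and p11 + p10 > 0, p11 + p01 > 0, p00 + p10 > 0, p00 + p01 > 0, and let y11, y10, y01, y00 be real numbers in [0,1]. Define E[Y|Ẑ=1] := (y11·p11 + y10·p10)/(p11 + p10), E[Y|Ẑ=0] := (y01·p01 + y00·p00)/(p01 + p00), E[Y|Z=1] := (y11·p11 + y01·p01)/(p11 + p01), E[Y|Z=0] := (y10·p10 + y00·p00)/(p10 + p00), S(Ẑ) := |E[Y|Ẑ=1] − E[Y|Ẑ=0]|, S(Z) := |E[Y|Z=1] − E[Y|Z=0]|, and p := min{p00 + p01, p00 + p10}. Then |S(Ẑ) − S(Z)| ≤ (1/p) · max{p10/(p11 + p10), p01/(p11 + p01)}. -/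
lemma prop1_frak1 (u v q q' p11 p10 p01 p00 y11 y10 y01 y00 : ℝ)
    (hu : u ≠ 0) (hv : v ≠ 0) (hq : q ≠ 0) (hq' : q' ≠ 0) :
    (p10 / u + p10 / q') -
      (((y11 * p11 + y10 * p10) / u - (y01 * p01 + y00 * p00) / q) -
       ((y11 * p11 + y01 * p01) / v - (y10 * p10 + y00 * p00) / q')) =
      p11 * y11 * (u - v) / (u * v)
      + p10 * (1 - y10) * (1 / u + 1 / q')
      + p01 * y01 * (1 / q + 1 / v)
      + p00 * y00 * (q' - q) / (q * q') := by
  field_simp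
  ring

lemma prop1_frak2 (u v q q' p11 p10 p01 p00 y11 y10 y01 y00 : ℝ)
    (hu : u ≠ 0) (hv : v ≠ 0) (hq : q ≠ 0) (hq' : q' ≠ 0)
    (hru : u = p11 + p10) (hrv : v = p11 + p01)
    (hrq : q = p01 + p00) (hrq' : q' = p10 + p00) :
    (p10 / u + p10 / q') +
      (((y11 * p11 + y10 * p10) / u - (y01 * p01 + y00 * p00) / q) -
       ((y11 * p11 + y01 * p01) / v - (y10 * p10 + y00 * p00) / q')) =
      p11 * (1 - y11) * (u - v) / (u * v)
      + p10 * y10 * (1 / u + 1 / q')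
      + p01 * (1 - y01) * (1 / q + 1 / v)
      + p00 * (1 - y00) * (q' - q) / (q * q') := by
  subst hru hrv hrq hrq'
  field_simp
  ring

set_option maxHeartbeats 1000000 in
theorem prop1_helper
    (p11 p10 p01 p00 : ℝ)
    (h11 : 0 ≤ p11) (h10 : 0 ≤ p10) (h01 : 0 ≤ p01) (h00 : 0 ≤ p00)
    (hsum : p11 + p10 + p01 + p00 = 1)
    (hZhat1 : 0 < p11 + p10) (hZ1 : 0 < p11 + p01)
    (hZ0 : 0 < p00 + p10) (hZhat0 : 0 < p00 + p01)
    (y11 y10 y01 y00 : ℝ)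
    (hy11 : y11 ∈ Set.Icc (0:ℝ) 1) (hy10 : y10 ∈ Set.Icc (0:ℝ) 1)
    (hy01 : y01 ∈ Set.Icc (0:ℝ) 1) (hy00 : y00 ∈ Set.Icc (0:ℝ) 1)
    (hle : p01 ≤ p10) :
    |(|(y11 * p11 + y10 * p10) / (p11 + p10) - (y01 * p01 + y00 * p00) / (p01 + p00)|)
      - (|(y11 * p11 + y01 * p01) / (p11 + p01) - (y10 * p10 + y00 * p00) / (p10 + p00)|)|
    ≤ (1 / min (p00 + p01) (p00 + p10)) *
        max (p10 / (p11 + p10)) (p01 / (p11 + p01)) := by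
  obtain ⟨hy11a, hy11b⟩ := hy11
  obtain ⟨hy10a, hy10b⟩ := hy10
  obtain ⟨hy01a, hy01b⟩ := hy01
  obtain ⟨hy00a, hy00b⟩ := hy00
  have hu : (0:ℝ) < p11 + p10 := hZhat1
  have hv : (0:ℝ) < p11 + p01 := hZ1
  have hq : (0:ℝ) < p01 + p00 := by linarith
  have hq' : (0:ℝ) < p10 + p00 := by linarith
  set A : ℝ := (y11 * p11 + y10 * p10) / (p11 + p10) - (y01 * p01 + y00 * p00) / (p01 + p00) with hA
  set B : ℝ := (y11 * p11 + y01 * p01) / (p11 + p01) - (y10 * p10 + y00 * p00) / (p10 + p00) with hB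
  have habs : |(|A| - |B|)| ≤ |A - B| := abs_abs_sub_abs_le_abs_sub A B
  -- nonnegative building blocks
  have huv : (0:ℝ) ≤ (p11 + p10) - (p11 + p01) := by linarith
  have hqq : (0:ℝ) ≤ (p10 + p00) - (p01 + p00) := by linarith
  have t1 : 0 ≤ p11 * y11 * ((p11 + p10) - (p11 + p01)) / ((p11 + p10) * (p11 + p01)) := by
    apply div_nonneg _ (by positivity); positivity
  have t2 : 0 ≤ p10 * (1 - y10) * (1 / (p11 + p10) + 1 / (p10 + p00)) := by
    have : (0:ℝ) ≤ 1 - y10 := by linarith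
    positivity
  have t3 : 0 ≤ p01 * y01 * (1 / (p01 + p00) + 1 / (p11 + p01)) := by positivity
  have t4 : 0 ≤ p00 * y00 * ((p10 + p00) - (p01 + p00)) / ((p01 + p00) * (p10 + p00)) := by
    apply div_nonneg _ (by positivity); positivity
  have s1 : 0 ≤ p11 * (1 - y11) * ((p11 + p10) - (p11 + p01)) / ((p11 + p10) * (p11 + p01)) := by
    have h2 : (0:ℝ) ≤ 1 - y11 := by linarith
    apply div_nonneg _ (by positivity); positivity
  have s2 : 0 ≤ p10 * y10 * (1 / (p11 + p10) + 1 / (p10 + p00)) := by positivity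
  have s3 : 0 ≤ p01 * (1 - y01) * (1 / (p01 + p00) + 1 / (p11 + p01)) := by
    have : (0:ℝ) ≤ 1 - y01 := by linarith
    positivity
  have s4 : 0 ≤ p00 * (1 - y00) * ((p10 + p00) - (p01 + p00)) / ((p01 + p00) * (p10 + p00)) := by
    have h2 : (0:ℝ) ≤ 1 - y00 := by linarith
    apply div_nonneg _ (by positivity); positivity
  have hid1 := prop1_frak1 (p11 + p10) (p11 + p01) (p01 + p00) (p10 + p00)
    p11 p10 p01 p00 y11 y10 y01 y00 hu.ne' hv.ne' hq.ne' hq'.ne'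
  have hid2 := prop1_frak2 (p11 + p10) (p11 + p01) (p01 + p00) (p10 + p00)
    p11 p10 p01 p00 y11 y10 y01 y00 hu.ne' hv.ne' hq.ne' hq'.ne' rfl rfl rfl rfl
  rw [← hA, ← hB] at hid1 hid2
  have hAB : |A - B| ≤ p10 / (p11 + p10) + p10 / (p10 + p00) := by
    rw [abs_le]
    constructor
    · linarith
    · linarith
  -- bound the coefficient sum by the RHS
  have hkey : (p00 + p01) * ((p10 + p00) + (p11 + p10)) ≤ p10 + p00 := by
    nlinarith [mul_nonneg (show (0:ℝ) ≤ 1 - (p00 + p01) by linarith)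
      (sub_nonneg.2 hle)]
  have hstep : p10 / (p11 + p10) + p10 / (p10 + p00) ≤
      1 / (p00 + p01) * (p10 / (p11 + p10)) := by
    rw [div_add_div _ _ hu.ne' hq'.ne', one_div, inv_mul_eq_div, div_div,
      div_le_div_iff₀ (by positivity) (by positivity)]
    nlinarith [mul_nonneg (mul_nonneg h10 hu.le)
      (sub_nonneg.2 hkey)]
  have hmin : min (p00 + p01) (p00 + p10) = p00 + p01 := min_eq_left (by linarith)
  have hfin : 1 / (p00 + p01) * (p10 / (p11 + p10)) ≤
      (1 / min (p00 + p01) (p00 + p10)) *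
        max (p10 / (p11 + p10)) (p01 / (p11 + p01)) := by
    rw [hmin]
    apply mul_le_mul_of_nonneg_left (le_max_left _ _) (by positivity)
  linarith

/-- Algebraic form of Proposition 1. -/
theorem prop1_algebraic
    (p11 p10 p01 p00 : ℝ)
    (h11 : 0 ≤ p11) (h10 : 0 ≤ p10) (h01 : 0 ≤ p01) (h00 : 0 ≤ p00)
    (hsum : p11 + p10 + p01 + p00 = 1)
    (hZhat1 : 0 < p11 + p10) (hZ1 : 0 < p11 + p01)
    (hZ0 : 0 < p00 + p10) (hZhat0 : 0 < p00 + p01)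
    (y11 y10 y01 y00 : ℝ)
    (hy11 : y11 ∈ Set.Icc (0:ℝ) 1) (hy10 : y10 ∈ Set.Icc (0:ℝ) 1)
    (hy01 : y01 ∈ Set.Icc (0:ℝ) 1) (hy00 : y00 ∈ Set.Icc (0:ℝ) 1) :
    |(|(y11 * p11 + y10 * p10) / (p11 + p10) - (y01 * p01 + y00 * p00) / (p01 + p00)|)
      - (|(y11 * p11 + y01 * p01) / (p11 + p01) - (y10 * p10 + y00 * p00) / (p10 + p00)|)|
    ≤ (1 / min (p00 + p01) (p00 + p10)) *
        max (p10 / (p11 + p10)) (p01 / (p11 + p01)) := by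
  rcases le_total p01 p10 with h | h
  · exact prop1_helper p11 p10 p01 p00 h11 h10 h01 h00 hsum hZhat1 hZ1 hZ0 hZhat0
      y11 y10 y01 y00 hy11 hy10 hy01 hy00 h
  · have H := prop1_helper p11 p01 p10 p00 h11 h01 h10 h00 (by linarith) hZ1 hZhat1
      hZhat0 hZ0 y11 y01 y10 y00 hy11 hy01 hy10 hy00 h
    rw [abs_sub_comm, min_comm, max_comm] at H
    exact H
end

section
/- Let (Ω, 𝒜, μ) be a probability space, Y : Ω → ℝ a measurable function with 0 ≤ Y ≤ 1 pointwise, and A, B measurable sets with 0 < μ(A) < 1 and 0 < μ(B) < 1. For a measurable set E with μ(E) > 0 write E[Y|E] := (∫_E Y dμ)/μ(E), and define the separation scores S(A) := |E[Y|A] − E[Y|Aᶜ]| and S(B) := |E[Y|B] − E[Y|Bᶜ]|, and the fidelity δ(A,B) := max{μ(A\B)/μ(A), μ(B\A)/μ(B)} / min{μ(Aᶜ), μ(Bᶜ)}. Then S(A) ≥ S(B) − δ(A,B). -/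
open MeasureTheory

private lemma aux_one_sided (c x y I J K : ℝ) (hc : 0 ≤ c) (hx : 0 ≤ x) (hy : 0 ≤ y)
    (ha : 0 < c + x) (hb : 0 < c + y)
    (hI0 : 0 ≤ I) (hIc : I ≤ c) (hJ0 : 0 ≤ J) (hJx : J ≤ x) (hK0 : 0 ≤ K) :
    (I + J) / (c + x) - (I + K) / (c + y) ≤ max (x / (c + x)) (y / (c + y)) := by
  rcases le_total x y with h | h
  · refine le_trans ?_ (le_max_right _ _)
    rw [div_sub_div _ _ ha.ne' hb.ne', div_le_div_iff₀ (mul_pos ha hb) hb]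
    have h1 : (I + J) * (c + y) - (c + x) * (I + K) ≤ y * (c + x) := by
      nlinarith [mul_nonneg hK0 ha.le, mul_nonneg (sub_nonneg.2 hIc) (sub_nonneg.2 h),
        mul_nonneg (sub_nonneg.2 hJx) hb.le]
    nlinarith [mul_le_mul_of_nonneg_right h1 hb.le]
  · refine le_trans ?_ (le_max_left _ _)
    rw [div_sub_div _ _ ha.ne' hb.ne', div_le_div_iff₀ (mul_pos ha hb) ha]
    have h1 : (I + J) * (c + y) - (c + x) * (I + K) ≤ x * (c + y) := by
      nlinarith [mul_nonneg hK0 ha.le, mul_nonneg hI0 (sub_nonneg.2 h),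
        mul_nonneg (sub_nonneg.2 hJx) hb.le]
    nlinarith [mul_le_mul_of_nonneg_right h1 ha.le]

lemma aux_abs (c x y I J K : ℝ) (hc : 0 ≤ c) (hx : 0 ≤ x) (hy : 0 ≤ y)
    (ha : 0 < c + x) (hb : 0 < c + y)
    (hI0 : 0 ≤ I) (hIc : I ≤ c) (hJ0 : 0 ≤ J) (hJx : J ≤ x) (hK0 : 0 ≤ K) (hKy : K ≤ y) :
    |(I + J) / (c + x) - (I + K) / (c + y)| ≤ max (x / (c + x)) (y / (c + y)) := by
  rw [abs_sub_le_iff]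
  refine ⟨aux_one_sided c x y I J K hc hx hy ha hb hI0 hIc hJ0 hJx hK0, ?_⟩
  rw [max_comm]
  exact aux_one_sided c y x I K J hc hy hx hb ha hI0 hIc hK0 hKy hJ0

lemma aux_kappa (a b a' b' x y κ κ' : ℝ) (ha : 0 < a) (hb : 0 < b) (ha' : 0 < a') (hb' : 0 < b')
    (hx : 0 ≤ x) (hy : 0 ≤ y) (hsa : a + a' = 1) (hsb : b + b' = 1)
    (hκ : κ = max (x / a) (y / b)) (hκ' : κ' = max (y / a') (x / b')) :
    κ + κ' ≤ κ / min a' b' := by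
  have hm0 : 0 < min a' b' := lt_min ha' hb'
  have hκ0 : 0 ≤ κ := hκ ▸ le_trans (div_nonneg hx ha.le) (le_max_left _ _)
  have hmaxsum : min a' b' + max a b = 1 := by
    rcases le_total a b with h | h
    · rw [min_eq_right (by linarith : b' ≤ a'), max_eq_right h]; linarith
    · rw [min_eq_left (by linarith : a' ≤ b'), max_eq_left h]; linarith
  have hmax0 : 0 ≤ max a b := le_trans ha.le (le_max_left _ _)
  have hxy0 : 0 ≤ max x y := le_trans hx (le_max_left _ _)
  have hxy : max x y ≤ κ * max a b := by
    rw [max_le_iff]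
    constructor
    · calc x = x / a * a := by field_simp
        _ ≤ κ * max a b := mul_le_mul (hκ ▸ le_max_left _ _) (le_max_left _ _) ha.le hκ0
    · calc y = y / b * b := by field_simp
        _ ≤ κ * max a b := mul_le_mul (hκ ▸ le_max_right _ _) (le_max_right _ _) hb.le hκ0
  have hκ'le : κ' ≤ max x y / min a' b' := by
    rw [hκ', max_le_iff]
    exact ⟨div_le_div₀ hxy0 (le_max_right x y) hm0 (min_le_left _ _),
      div_le_div₀ hxy0 (le_max_left x y) hm0 (min_le_right _ _)⟩
  have h2 : κ' ≤ κ * max a b / min a' b' := hκ'le.trans ((div_le_div_iff_of_pos_right hm0).2 hxy)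
  have h3 : κ + κ * max a b / min a' b' = κ / min a' b' := by
    rw [eq_div_iff hm0.ne', add_mul, div_mul_cancel₀ _ hm0.ne']
    linear_combination κ * hmaxsum
  linarith

lemma cond_exp_diff_bound {Ω : Type*} [MeasurableSpace Ω] (μ : Measure Ω) [IsProbabilityMeasure μ]
    (Y : Ω → ℝ) (hYmeas : Measurable Y) (hY0 : ∀ ω, 0 ≤ Y ω) (hY1 : ∀ ω, Y ω ≤ 1)
    (A B : Set Ω) (hA : MeasurableSet A) (hB : MeasurableSet B)
    (hA0 : 0 < μ A) (hB0 : 0 < μ B) :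
    |(∫ ω in A, Y ω ∂μ) / (μ A).toReal - (∫ ω in B, Y ω ∂μ) / (μ B).toReal|
      ≤ max ((μ (A \ B)).toReal / (μ A).toReal) ((μ (B \ A)).toReal / (μ B).toReal) := by
  have hInt : Integrable Y μ := by
    refine (integrable_const (1:ℝ)).mono' hYmeas.aestronglyMeasurable (ae_of_all _ fun ω => ?_)
    rw [Real.norm_eq_abs, abs_of_nonneg (hY0 ω)]; exact hY1 ω
  have hbound : ∀ E : Set Ω, MeasurableSet E →
      0 ≤ (∫ ω in E, Y ω ∂μ) ∧ (∫ ω in E, Y ω ∂μ) ≤ (μ E).toReal := by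
    intro E hE
    constructor
    · exact setIntegral_nonneg hE fun ω _ => hY0 ω
    · calc (∫ ω in E, Y ω ∂μ) ≤ ∫ _ in E, (1:ℝ) ∂μ :=
            setIntegral_mono_on hInt.integrableOn (integrable_const 1).integrableOn hE
              fun ω _ => hY1 ω
        _ = (μ E).toReal := by simp; rfl
  -- split the integrals
  have hdisjA : Disjoint (A ∩ B) (A \ B) := by
    rw [Set.disjoint_left]; rintro ω ⟨-, hωB⟩ ⟨-, hωB'⟩; exact hωB' hωB
  have hdisjB : Disjoint (A ∩ B) (B \ A) := by
    rw [Set.disjoint_left]; rintro ω ⟨hωA, -⟩ ⟨-, hωA'⟩; exact hωA' hωA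
  have hsplitA : (∫ ω in A, Y ω ∂μ) = (∫ ω in A ∩ B, Y ω ∂μ) + ∫ ω in A \ B, Y ω ∂μ := by
    rw [← setIntegral_union hdisjA (hA.diff hB) hInt.integrableOn hInt.integrableOn,
      Set.inter_union_diff]
  have hsplitB : (∫ ω in B, Y ω ∂μ) = (∫ ω in A ∩ B, Y ω ∂μ) + ∫ ω in B \ A, Y ω ∂μ := by
    rw [← setIntegral_union hdisjB (hB.diff hA) hInt.integrableOn hInt.integrableOn]
    congr 1
    rw [Set.inter_comm, Set.inter_union_diff]
  have hmA : (μ A).toReal = (μ (A ∩ B)).toReal + (μ (A \ B)).toReal := by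
    rw [← ENNReal.toReal_add (measure_ne_top μ _) (measure_ne_top μ _),
      measure_inter_add_diff A hB]
  have hmB : (μ B).toReal = (μ (A ∩ B)).toReal + (μ (B \ A)).toReal := by
    rw [← ENNReal.toReal_add (measure_ne_top μ _) (measure_ne_top μ _), Set.inter_comm,
      measure_inter_add_diff B hA]
  rw [hsplitA, hsplitB, hmA, hmB]
  exact aux_abs _ _ _ _ _ _ ENNReal.toReal_nonneg ENNReal.toReal_nonneg ENNReal.toReal_nonneg
    (hmA ▸ ENNReal.toReal_pos hA0.ne' (measure_ne_top μ A))
    (hmB ▸ ENNReal.toReal_pos hB0.ne' (measure_ne_top μ B))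
    (hbound _ (hA.inter hB)).1 ((hbound _ (hA.inter hB)).2)
    (hbound _ (hA.diff hB)).1 ((hbound _ (hA.diff hB)).2)
    (hbound _ (hB.diff hA)).1 ((hbound _ (hB.diff hA)).2)

/-- Equation (4) of the paper: `S(A) ≥ S(B) − δ(A,B)`. -/
theorem separation_decomposition_lower_bound
    {Ω : Type*} [MeasurableSpace Ω] (μ : Measure Ω) [IsProbabilityMeasure μ]
    (Y : Ω → ℝ) (hYmeas : Measurable Y)
    (hY0 : ∀ ω, 0 ≤ Y ω) (hY1 : ∀ ω, Y ω ≤ 1)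
    (A B : Set Ω) (hA : MeasurableSet A) (hB : MeasurableSet B)
    (hA0 : 0 < μ A) (hA1 : μ A < 1) (hB0 : 0 < μ B) (hB1 : μ B < 1) :
    |(∫ ω in A, Y ω ∂μ) / (μ A).toReal - (∫ ω in Aᶜ, Y ω ∂μ) / (μ Aᶜ).toReal|
    ≥ |(∫ ω in B, Y ω ∂μ) / (μ B).toReal - (∫ ω in Bᶜ, Y ω ∂μ) / (μ Bᶜ).toReal|
      - max ((μ (A \ B)).toReal / (μ A).toReal) ((μ (B \ A)).toReal / (μ B).toReal) /
          min (μ Aᶜ).toReal (μ Bᶜ).toReal := by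
  have hAc0 : 0 < μ Aᶜ := by
    rw [measure_compl hA (measure_ne_top μ A), measure_univ, tsub_pos_iff_lt]; exact hA1
  have hBc0 : 0 < μ Bᶜ := by
    rw [measure_compl hB (measure_ne_top μ B), measure_univ, tsub_pos_iff_lt]; exact hB1
  have ha : 0 < (μ A).toReal := ENNReal.toReal_pos hA0.ne' (measure_ne_top μ A)
  have hb : 0 < (μ B).toReal := ENNReal.toReal_pos hB0.ne' (measure_ne_top μ B)
  have ha' : 0 < (μ Aᶜ).toReal := ENNReal.toReal_pos hAc0.ne' (measure_ne_top μ Aᶜ)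
  have hb' : 0 < (μ Bᶜ).toReal := ENNReal.toReal_pos hBc0.ne' (measure_ne_top μ Bᶜ)
  have hsa : (μ A).toReal + (μ Aᶜ).toReal = 1 := by
    rw [← ENNReal.toReal_add (measure_ne_top μ A) (measure_ne_top μ Aᶜ),
      measure_add_measure_compl hA]
    simp
  have hsb : (μ B).toReal + (μ Bᶜ).toReal = 1 := by
    rw [← ENNReal.toReal_add (measure_ne_top μ B) (measure_ne_top μ Bᶜ),
      measure_add_measure_compl hB]
    simp
  have hc1 : Aᶜ \ Bᶜ = B \ A := by ext ω; simp [Set.mem_diff]; tauto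
  have hc2 : Bᶜ \ Aᶜ = A \ B := by ext ω; simp [Set.mem_diff]; tauto
  have h1 := cond_exp_diff_bound μ Y hYmeas hY0 hY1 A B hA hB hA0 hB0
  have h2 := cond_exp_diff_bound μ Y hYmeas hY0 hY1 Aᶜ Bᶜ hA.compl hB.compl hAc0 hBc0
  rw [hc1, hc2] at h2
  set κ := max ((μ (A \ B)).toReal / (μ A).toReal) ((μ (B \ A)).toReal / (μ B).toReal) with hκ
  set κ' := max ((μ (B \ A)).toReal / (μ Aᶜ).toReal) ((μ (A \ B)).toReal / (μ Bᶜ).toReal)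
    with hκ'
  have hkap : κ + κ' ≤ κ / min (μ Aᶜ).toReal (μ Bᶜ).toReal :=
    aux_kappa _ _ _ _ _ _ _ _ ha hb ha' hb' ENNReal.toReal_nonneg ENNReal.toReal_nonneg
      hsa hsb hκ hκ'
  set DA := (∫ ω in A, Y ω ∂μ) / (μ A).toReal - (∫ ω in Aᶜ, Y ω ∂μ) / (μ Aᶜ).toReal with hDA
  set DB := (∫ ω in B, Y ω ∂μ) / (μ B).toReal - (∫ ω in Bᶜ, Y ω ∂μ) / (μ Bᶜ).toReal with hDB
  have habs : |DA - DB| ≤ κ + κ' := by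
    have : DA - DB = ((∫ ω in A, Y ω ∂μ) / (μ A).toReal - (∫ ω in B, Y ω ∂μ) / (μ B).toReal)
        - ((∫ ω in Aᶜ, Y ω ∂μ) / (μ Aᶜ).toReal - (∫ ω in Bᶜ, Y ω ∂μ) / (μ Bᶜ).toReal) := by
      rw [hDA, hDB]; ring
    rw [this]
    exact le_trans (abs_sub _ _) (add_le_add h1 h2)
  have := abs_sub_abs_le_abs_sub DB DA
  rw [abs_sub_comm DB DA] at this
  linarith
end

section
/- Let p11, p10, p01 be nonnegative real numbers with p11 + p10 > 0 and p11 + p01 > 0, and let y11, y10, y01 be real numbers in [0,1]. Then |(y11·p11 + y10·p10)/(p11 + p10) − (y11·p11 + y01·p01)/(p11 + p01)| ≤ max{p10/(p11 + p10), p01/(p11 + p01)}. -/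
/-- Combined intermediate bound in the proof of Proposition 1:
`|E[Y|Ẑ=1] − E[Y|Z=1]| ≤ max{p10/(p11+p10), p01/(p11+p01)}`. -/
theorem prop1_one_conditioned_bound
    (p11 p10 p01 : ℝ) (h11 : 0 ≤ p11) (h10 : 0 ≤ p10) (h01 : 0 ≤ p01)
    (hZhat1 : 0 < p11 + p10) (hZ1 : 0 < p11 + p01)
    (y11 y10 y01 : ℝ)
    (hy11 : y11 ∈ Set.Icc (0:ℝ) 1) (hy10 : y10 ∈ Set.Icc (0:ℝ) 1)
    (hy01 : y01 ∈ Set.Icc (0:ℝ) 1) :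
    |(y11 * p11 + y10 * p10) / (p11 + p10) - (y11 * p11 + y01 * p01) / (p11 + p01)|
    ≤ max (p10 / (p11 + p10)) (p01 / (p11 + p01)) := by
  obtain ⟨h110, h111⟩ := hy11
  obtain ⟨h100, h101⟩ := hy10
  obtain ⟨h010, h011⟩ := hy01
  set t := p10 / (p11 + p10) with ht
  set u := p01 / (p11 + p01) with hu
  have ht0 : 0 ≤ t := div_nonneg h10 hZhat1.le
  have ht1 : t ≤ 1 := by
    rw [ht, div_le_one hZhat1]; linarith
  have hu0 : 0 ≤ u := div_nonneg h01 hZ1.le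
  have hu1 : u ≤ 1 := by
    rw [hu, div_le_one hZ1]; linarith
  have key : (y11 * p11 + y10 * p10) / (p11 + p10) - (y11 * p11 + y01 * p01) / (p11 + p01)
      = t * (y10 - y11) - u * (y01 - y11) := by
    rw [ht, hu]
    field_simp
    ring
  rw [key, abs_le]
  rcases le_total t u with h | h
  · constructor
    · rw [max_eq_right h]; nlinarith
    · rw [max_eq_right h]; nlinarith
  · constructor
    · rw [max_eq_left h]; nlinarith
    · rw [max_eq_left h]; nlinarith
end

section
/- Let p11, p10, p01, p00 be nonnegative real numbers with p00 + p10 > 0 and p00 + p01 > 0, and let y11, y10, y01, y00 be real numbers in [0,1]. Then |(y01·p01 + y00·p00)/(p01 + p00) − (y10·p10 + y00·p00)/(p10 + p00)| ≤ max{p10/(p00 + p10), p01/(p00 + p01)}. -/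
/-- Zero-conditioned intermediate bound in the proof of Proposition 1:
`|E[Y|Ẑ=0] − E[Y|Z=0]| ≤ max{p10/(p00+p10), p01/(p00+p01)}`. -/
theorem prop1_zero_conditioned_bound
    (p11 p10 p01 p00 : ℝ)
    (h11 : 0 ≤ p11) (h10 : 0 ≤ p10) (h01 : 0 ≤ p01) (h00 : 0 ≤ p00)
    (hZ0 : 0 < p00 + p10) (hZhat0 : 0 < p00 + p01)
    (y11 y10 y01 y00 : ℝ)
    (hy11 : y11 ∈ Set.Icc (0:ℝ) 1) (hy10 : y10 ∈ Set.Icc (0:ℝ) 1)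
    (hy01 : y01 ∈ Set.Icc (0:ℝ) 1) (hy00 : y00 ∈ Set.Icc (0:ℝ) 1) :
    |(y01 * p01 + y00 * p00) / (p01 + p00) - (y10 * p10 + y00 * p00) / (p10 + p00)|
    ≤ max (p10 / (p00 + p10)) (p01 / (p00 + p01)) := by
  obtain ⟨h01a, h01b⟩ := hy01
  obtain ⟨h10a, h10b⟩ := hy10
  obtain ⟨h00a, h00b⟩ := hy00
  have hd1 : (0:ℝ) < p01 + p00 := by linarith
  have hd2 : (0:ℝ) < p10 + p00 := by linarith
  set α := p01 / (p01 + p00) with hαdef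
  set β := p10 / (p10 + p00) with hβdef
  set M := max (p10 / (p00 + p10)) (p01 / (p00 + p01)) with hM
  have hα0 : 0 ≤ α := div_nonneg h01 hd1.le
  have hβ0 : 0 ≤ β := div_nonneg h10 hd2.le
  have hαM : α ≤ M := by
    rw [hαdef, hM, add_comm p01 p00]; exact le_max_right _ _
  have hβM : β ≤ M := by
    rw [hβdef, hM, add_comm p10 p00]; exact le_max_left _ _
  have hA : (y01 * p01 + y00 * p00) / (p01 + p00) = y00 + (y01 - y00) * α := by
    rw [hαdef]; field_simp; ring
  have hB : (y10 * p10 + y00 * p00) / (p10 + p00) = y00 + (y10 - y00) * β := by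
    rw [hβdef]; field_simp; ring
  rw [hA, hB, abs_le]
  constructor
  · nlinarith [mul_nonneg h00a (sub_nonneg.2 hαM), mul_nonneg (by linarith : (0:ℝ) ≤ 1 - y00) (sub_nonneg.2 hβM), mul_nonneg h10a hβ0, mul_nonneg (by linarith : (0:ℝ) ≤ 1 - y01) hα0]
  · nlinarith [mul_nonneg h00a (sub_nonneg.2 hβM), mul_nonneg (by linarith : (0:ℝ) ≤ 1 - y00) (sub_nonneg.2 hαM), mul_nonneg h01a hα0, mul_nonneg (by linarith : (0:ℝ) ≤ 1 - y10) hβ0]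
end

section
/- Let (Ω, 𝒜, μ) be a probability space, Y : Ω → ℝ a measurable function with 0 ≤ Y ≤ 1 pointwise, and A, B measurable sets with 0 < μ(Aᶜ) and 0 < μ(Bᶜ). For a measurable set E with μ(E) > 0 write E[Y|E] := (∫_E Y dμ)/μ(E). Then |E[Y|Aᶜ] − E[Y|Bᶜ]| ≤ max{μ(A\B)/μ(Bᶜ), μ(B\A)/μ(Aᶜ)}. -/
open MeasureTheory

lemma aux_key (c p q IC IP IQ : ℝ) (hc : 0 ≤ c)
    (hIC0 : 0 ≤ IC) (hICc : IC ≤ c) (hIP0 : 0 ≤ IP) (hIPp : IP ≤ p)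
    (hIQ0 : 0 ≤ IQ) (hIQq : IQ ≤ q) (ha : 0 < c + p) (hb : 0 < c + q) :
    (IC + IP) / (c + p) - (IC + IQ) / (c + q)
      ≤ max (q / (c + q)) (p / (c + p)) := by
  set a := c + p with hadef
  set b := c + q with hbdef
  have hab : 0 < a * b := mul_pos ha hb
  rcases le_total p q with hpq | hpq
  · have hnum : (IC + IP) * b - (IC + IQ) * a ≤ q * a := by
      nlinarith [mul_nonneg (sub_nonneg.2 hICc) (sub_nonneg.2 hpq),
        mul_nonneg (sub_nonneg.2 hIPp) hb.le, mul_nonneg hIQ0 ha.le]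
    have : (IC + IP) / a - (IC + IQ) / b ≤ q / b := by
      rw [div_sub_div _ _ ha.ne' hb.ne', div_le_div_iff₀ hab hb]
      nlinarith [mul_le_mul_of_nonneg_right hnum hb.le]
    exact this.trans (le_max_left _ _)
  · have hnum : (IC + IP) * b - (IC + IQ) * a ≤ p * b := by
      nlinarith [mul_nonneg hIC0 (sub_nonneg.2 hpq),
        mul_nonneg (sub_nonneg.2 hIPp) hb.le, mul_nonneg hIQ0 ha.le]
    have : (IC + IP) / a - (IC + IQ) / b ≤ p / a := by
      rw [div_sub_div _ _ ha.ne' hb.ne', div_le_div_iff₀ hab ha]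
      nlinarith [mul_le_mul_of_nonneg_right hnum ha.le]
    exact this.trans (le_max_right _ _)

lemma aux_abs_s13 (c p q IC IP IQ : ℝ) (hc : 0 ≤ c) (hp : 0 ≤ p) (hq : 0 ≤ q)
    (hIC0 : 0 ≤ IC) (hICc : IC ≤ c) (hIP0 : 0 ≤ IP) (hIPp : IP ≤ p)
    (hIQ0 : 0 ≤ IQ) (hIQq : IQ ≤ q) (ha : 0 < c + p) (hb : 0 < c + q) :
    |(IC + IP) / (c + p) - (IC + IQ) / (c + q)|
      ≤ max (q / (c + q)) (p / (c + p)) := by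
  rw [abs_sub_le_iff]
  constructor
  · exact aux_key c p q IC IP IQ hc hIC0 hICc hIP0 hIPp hIQ0 hIQq ha hb
  · rw [max_comm]
    exact aux_key c q p IC IQ IP hc hIC0 hICc hIQ0 hIQq hIP0 hIPp hb ha

/-- Measure-theoretic zero-conditioned intermediate bound in the proof of Proposition 1:
`|E[Y|Aᶜ] − E[Y|Bᶜ]| ≤ max{μ(A\B)/μ(Bᶜ), μ(B\A)/μ(Aᶜ)}`. -/
theorem condMean_compl_diff_le_max
    {Ω : Type*} [MeasurableSpace Ω] (μ : Measure Ω) [IsProbabilityMeasure μ]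
    (Y : Ω → ℝ) (hYmeas : Measurable Y)
    (hY0 : ∀ ω, 0 ≤ Y ω) (hY1 : ∀ ω, Y ω ≤ 1)
    (A B : Set Ω) (hA : MeasurableSet A) (hB : MeasurableSet B)
    (hA0 : 0 < μ Aᶜ) (hB0 : 0 < μ Bᶜ) :
    |(∫ ω in Aᶜ, Y ω ∂μ) / (μ Aᶜ).toReal - (∫ ω in Bᶜ, Y ω ∂μ) / (μ Bᶜ).toReal|
    ≤ max ((μ (A \ B)).toReal / (μ Bᶜ).toReal) ((μ (B \ A)).toReal / (μ Aᶜ).toReal) := by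
  have hYint : Integrable Y μ := by
    refine (integrable_const (1 : ℝ)).mono' hYmeas.aestronglyMeasurable ?_
    filter_upwards with ω
    rw [Real.norm_eq_abs, abs_of_nonneg (hY0 ω)]; exact hY1 ω
  -- set pieces
  have hC : MeasurableSet (Aᶜ ∩ Bᶜ) := hA.compl.inter hB.compl
  have hP : MeasurableSet (B \ A) := hB.diff hA
  have hQ : MeasurableSet (A \ B) := hA.diff hB
  have hAsplit : Aᶜ = (Aᶜ ∩ Bᶜ) ∪ (B \ A) := by
    ext ω; by_cases hω : ω ∈ B <;> simp [hω, Set.mem_diff]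
  have hBsplit : Bᶜ = (Aᶜ ∩ Bᶜ) ∪ (A \ B) := by
    ext ω; by_cases hω : ω ∈ A <;> simp [hω, Set.mem_diff, and_comm]
  have hdisjA : Disjoint (Aᶜ ∩ Bᶜ) (B \ A) := by
    refine Set.disjoint_left.2 ?_
    rintro ω ⟨-, hω⟩ ⟨hω', -⟩; exact hω hω'
  have hdisjB : Disjoint (Aᶜ ∩ Bᶜ) (A \ B) := by
    refine Set.disjoint_left.2 ?_
    rintro ω ⟨hω, -⟩ ⟨hω', -⟩; exact hω hω'
  -- measures
  set c := (μ (Aᶜ ∩ Bᶜ)).toReal with hc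
  set p := (μ (B \ A)).toReal with hp
  set q := (μ (A \ B)).toReal with hq
  have hmA : (μ Aᶜ).toReal = c + p := by
    rw [hAsplit, measure_union hdisjA hP,
      ENNReal.toReal_add (measure_ne_top μ _) (measure_ne_top μ _)]
  have hmB : (μ Bᶜ).toReal = c + q := by
    rw [hBsplit, measure_union hdisjB hQ,
      ENNReal.toReal_add (measure_ne_top μ _) (measure_ne_top μ _)]
  -- integrals
  have hIA : ∫ ω in Aᶜ, Y ω ∂μ
      = (∫ ω in Aᶜ ∩ Bᶜ, Y ω ∂μ) + ∫ ω in B \ A, Y ω ∂μ := by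
    conv_lhs => rw [hAsplit]
    exact setIntegral_union hdisjA hP hYint.integrableOn hYint.integrableOn
  have hIB : ∫ ω in Bᶜ, Y ω ∂μ
      = (∫ ω in Aᶜ ∩ Bᶜ, Y ω ∂μ) + ∫ ω in A \ B, Y ω ∂μ := by
    conv_lhs => rw [hBsplit]
    exact setIntegral_union hdisjB hQ hYint.integrableOn hYint.integrableOn
  -- bounds for set integrals
  have hlow : ∀ E : Set Ω, MeasurableSet E → 0 ≤ ∫ ω in E, Y ω ∂μ := fun E hE =>
    setIntegral_nonneg hE fun ω _ => hY0 ω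
  have hup : ∀ E : Set Ω, MeasurableSet E → (∫ ω in E, Y ω ∂μ) ≤ (μ E).toReal := by
    intro E hE
    calc (∫ ω in E, Y ω ∂μ) ≤ ∫ _ in E, (1 : ℝ) ∂μ := by
          refine setIntegral_mono_on hYint.integrableOn
            (integrableOn_const (measure_ne_top μ E)) hE fun ω _ => hY1 ω
      _ = (μ E).toReal := by simp [Measure.real]
  have hc0 : 0 ≤ c := ENNReal.toReal_nonneg
  have hp0 : 0 ≤ p := ENNReal.toReal_nonneg
  have hq0 : 0 ≤ q := ENNReal.toReal_nonneg
  have haR : 0 < c + p := by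
    rw [← hmA]; exact ENNReal.toReal_pos hA0.ne' (measure_ne_top μ _)
  have hbR : 0 < c + q := by
    rw [← hmB]; exact ENNReal.toReal_pos hB0.ne' (measure_ne_top μ _)
  rw [hIA, hIB, hmA, hmB]
  exact aux_abs_s13 c p q _ _ _ hc0 hp0 hq0 (hlow _ hC) (hup _ hC)
    (hlow _ hP) (hup _ hP) (hlow _ hQ) (hup _ hQ) haR hbR
end

section
/- Let p11, p10, p01, p00 be nonnegative real numbers with p11 + p10 + p01 + p00 = 1, p11 + p10 > 0, p11 + p01 > 0, p00 + p10 > 0, and p00 + p01 > 0, let y11, y10, y01, y00 be real numbers in [0,1], and set p := min{p00 + p01, p00 + p10}. Define E[Y|Ẑ=1] := (y11·p11 + y10·p10)/(p11 + p10), E[Y|Ẑ=0] := (y01·p01 + y00·p00)/(p01 + p00), E[Y|Z=1] := (y11·p11 + y01·p01)/(p11 + p01), and E[Y|Z=0] := (y10·p10 + y00·p00)/(p10 + p00). Then |(E[Y|Ẑ=1] − E[Y|Ẑ=0]) − (E[Y|Z=1] − E[Y|Z=0])| ≤ (1 + (1 − p)/p) · max{p10/(p11 + p10), p01/(p11 +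 p01)} = (1/p) · max{p10/(p11 + p10), p01/(p11 + p01)}. -/
lemma convex_diff_bound (y u v t1 t2 : ℝ)
    (hy : y ∈ Set.Icc (0:ℝ) 1) (hu : u ∈ Set.Icc (0:ℝ) 1) (hv : v ∈ Set.Icc (0:ℝ) 1)
    (ht1 : 0 ≤ t1) (ht2 : 0 ≤ t2) :
    |(y * (1 - t1) + u * t1) - (y * (1 - t2) + v * t2)| ≤ max t1 t2 := by
  obtain ⟨hy0, hy1⟩ := hy
  obtain ⟨hu0, hu1⟩ := hu
  obtain ⟨hv0, hv1⟩ := hv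
  rw [abs_le]
  rcases le_total t1 t2 with h | h
  · constructor
    · have : max t1 t2 = t2 := max_eq_right h
      nlinarith [mul_nonneg hv0 ht2]
    · have : max t1 t2 = t2 := max_eq_right h
      nlinarith [mul_nonneg hu0 ht1]
  · constructor
    · have : max t1 t2 = t1 := max_eq_left h
      nlinarith [mul_nonneg hv0 ht2]
    · have : max t1 t2 = t1 := max_eq_left h
      nlinarith [mul_nonneg hu0 ht1]

/-- Final assembly step in the proof of Proposition 1:
`|(E[Y|Ẑ=1] − E[Y|Ẑ=0]) − (E[Y|Z=1] − E[Y|Z=0])|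
  ≤ (1 + (1 − p)/p) · max{p10/(p11+p10), p01/(p11+p01)}
  = (1/p) · max{p10/(p11+p10), p01/(p11+p01)}`. -/
theorem prop1_final_assembly
    (p11 p10 p01 p00 : ℝ)
    (h11 : 0 ≤ p11) (h10 : 0 ≤ p10) (h01 : 0 ≤ p01) (h00 : 0 ≤ p00)
    (hsum : p11 + p10 + p01 + p00 = 1)
    (hZhat1 : 0 < p11 + p10) (hZ1 : 0 < p11 + p01)
    (hZ0 : 0 < p00 + p10) (hZhat0 : 0 < p00 + p01)
    (y11 y10 y01 y00 : ℝ)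
    (hy11 : y11 ∈ Set.Icc (0:ℝ) 1) (hy10 : y10 ∈ Set.Icc (0:ℝ) 1)
    (hy01 : y01 ∈ Set.Icc (0:ℝ) 1) (hy00 : y00 ∈ Set.Icc (0:ℝ) 1)
    (p : ℝ) (hp : p = min (p00 + p01) (p00 + p10)) :
    |((y11 * p11 + y10 * p10) / (p11 + p10) - (y01 * p01 + y00 * p00) / (p01 + p00))
      - ((y11 * p11 + y01 * p01) / (p11 + p01) - (y10 * p10 + y00 * p00) / (p10 + p00))|
    ≤ (1 + (1 - p) / p) * max (p10 / (p11 + p10)) (p01 / (p11 + p01)) ∧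
    (1 + (1 - p) / p) * max (p10 / (p11 + p10)) (p01 / (p11 + p01))
    = (1 / p) * max (p10 / (p11 + p10)) (p01 / (p11 + p01)) := by
  have hp0 : 0 < p := by rw [hp]; exact lt_min hZhat0 hZ0
  have hp1 : 1 - p = max (p11 + p10) (p11 + p01) := by
    rcases le_total (p00 + p01) (p00 + p10) with h | h
    · rw [hp, min_eq_left h, max_eq_left (by linarith)]; linarith
    · rw [hp, min_eq_right h, max_eq_right (by linarith)]; linarith
  set M := max (p10 / (p11 + p10)) (p01 / (p11 + p01)) with hM
  have hMnn : 0 ≤ M := le_trans (div_nonneg h10 hZhat1.le) (le_max_left _ _)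
  -- first bound
  have A1 : (y11 * p11 + y10 * p10) / (p11 + p10)
      = y11 * (1 - p10 / (p11 + p10)) + y10 * (p10 / (p11 + p10)) := by
    field_simp <;> ring
  have B1 : (y11 * p11 + y01 * p01) / (p11 + p01)
      = y11 * (1 - p01 / (p11 + p01)) + y01 * (p01 / (p11 + p01)) := by
    field_simp <;> ring
  have bound1 : |(y11 * p11 + y10 * p10) / (p11 + p10)
      - (y11 * p11 + y01 * p01) / (p11 + p01)| ≤ M := by
    rw [A1, B1]
    exact convex_diff_bound y11 y10 y01 _ _ hy11 hy10 hy01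
      (div_nonneg h10 hZhat1.le) (div_nonneg h01 hZ1.le)
  -- second bound
  have A0 : (y01 * p01 + y00 * p00) / (p01 + p00)
      = y00 * (1 - p01 / (p01 + p00)) + y01 * (p01 / (p01 + p00)) := by
    have : p01 + p00 ≠ 0 := by linarith
    field_simp <;> ring
  have B0 : (y10 * p10 + y00 * p00) / (p10 + p00)
      = y00 * (1 - p10 / (p10 + p00)) + y10 * (p10 / (p10 + p00)) := by
    have : p10 + p00 ≠ 0 := by linarith
    field_simp <;> ring
  have bound0' : |(y01 * p01 + y00 * p00) / (p01 + p00)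
      - (y10 * p10 + y00 * p00) / (p10 + p00)|
      ≤ max (p01 / (p01 + p00)) (p10 / (p10 + p00)) := by
    rw [A0, B0]
    exact convex_diff_bound y00 y01 y10 _ _ hy00 hy01 hy10
      (div_nonneg h01 (by linarith)) (div_nonneg h10 (by linarith))
  have key01 : p01 / (p01 + p00) ≤ (1 - p) / p * (p01 / (p11 + p01)) := by
    rw [div_mul_div_comm]
    rw [div_le_div_iff₀ (by linarith) (by positivity)]
    have h1 : p ≤ p00 + p01 := by rw [hp]; exact min_le_left _ _
    have h2 : p11 + p01 ≤ 1 - p := by rw [hp1]; exact le_max_right _ _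
    nlinarith [mul_le_mul h2 h1 hp0.le (by linarith : (0:ℝ) ≤ 1 - p), mul_nonneg h01 hp0.le]
  have key10 : p10 / (p10 + p00) ≤ (1 - p) / p * (p10 / (p11 + p10)) := by
    rw [div_mul_div_comm]
    rw [div_le_div_iff₀ (by linarith) (by positivity)]
    have h1 : p ≤ p00 + p10 := by rw [hp]; exact min_le_right _ _
    have h2 : p11 + p10 ≤ 1 - p := by rw [hp1]; exact le_max_left _ _
    nlinarith [mul_le_mul h2 h1 hp0.le (by linarith : (0:ℝ) ≤ 1 - p), mul_nonneg h10 hp0.le]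
  have hfrac : 0 ≤ (1 - p) / p := by
    have : 0 < 1 - p := by rw [hp1]; exact lt_max_of_lt_left hZhat1
    positivity
  have bound0 : |(y01 * p01 + y00 * p00) / (p01 + p00)
      - (y10 * p10 + y00 * p00) / (p10 + p00)| ≤ (1 - p) / p * M := by
    refine bound0'.trans (max_le ?_ ?_)
    · exact key01.trans (mul_le_mul_of_nonneg_left (le_max_right _ _) hfrac)
    · exact key10.trans (mul_le_mul_of_nonneg_left (le_max_left _ _) hfrac)
  constructor
  · calc |((y11 * p11 + y10 * p10) / (p11 + p10) - (y01 * p01 + y00 * p00) / (p01 + p00))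
        - ((y11 * p11 + y01 * p01) / (p11 + p01) - (y10 * p10 + y00 * p00) / (p10 + p00))|
        ≤ |(y11 * p11 + y10 * p10) / (p11 + p10) - (y11 * p11 + y01 * p01) / (p11 + p01)|
          + |(y01 * p01 + y00 * p00) / (p01 + p00) - (y10 * p10 + y00 * p00) / (p10 + p00)| := by
          rw [show ∀ a b c d : ℝ, (a - b) - (c - d) = (a - c) + (b - d) * (-1) by intros; ring]
          calc _ ≤ _ := abs_add_le _ _
          _ = _ := by rw [abs_mul, abs_neg, abs_one, mul_one]
      _ ≤ M + (1 - p) / p * M := add_le_add bound1 bound0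
      _ = (1 + (1 - p) / p) * M := by ring
  · have : 1 + (1 - p) / p = 1 / p := by field_simp; ring
    rw [this]
end
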